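/- Let (T, T̂₂, Ť₂, T₀) be a multiplier bimonad on a monoidal category C such that T₀ : TI ⟶ I and, for all objects X, Y, the (equal) composites T(TX ⊗ TY) ⟶ TX ⊗ TY given by T̂₂^{TX,Y} ≫ (T̂₂^{I,X} ⊗ 1_{TY}) ≫ (T₀ ⊗ 1_{TX} ⊗ 1_{TY}) and by Ť₂^{X,TY} ≫ (1_{TX} ⊗ Ť₂^{Y,I}) ≫ (1_{TX} ⊗ 1_{TY} ⊗ T₀) (identifying T²X = T(I ⊗ TX) = T(TX ⊗ I)) are split epimorphisms. Let (Q, q̂, q̌) and (P, p̂, p̌) be modules over this multiplier bimonad. Then P ⊗ Q is a module via r̂_X := q̂_{X⊗P} ≫ (p̂_X ⊗ 1_Q) : T(X ⊗ P ⊗ Q) ⟶ TX ⊗ P ⊗ Q and ř_X := p̌_{Q⊗X} ≫ (1_P ⊗ q̌_X) : T(P ⊗ Q ⊗ X) ⟶ P ⊗ Q ⊗ TX; in particular the interchange law p̌_{X⊗Q} ≫ (1_P ⊗ q̂_X) = q̂_{P⊗X} ≫ (p̌_X ⊗ 1_Q) holds as natural transformations T(P ⊗ X ⊗ Q) ⟶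 P ⊗ TX ⊗ Q, and r̂_I ≫ (T₀ ⊗ 1_{P⊗Q}) = ř_I ≫ (1_{P⊗Q} ⊗ T₀) as morphisms T(P ⊗ Q) ⟶ P ⊗ Q, this common composite being a split epimorphism. -/

import Mathlib

/-!
Write `e_Q := q̂_I ≫ (T₀ ⊗ 1) : TQ ⟶ Q` for the action induced by a module. The module axioms of
`P ⊗ Q` follow from those of `Q` and of `P` applied one after the other. The interchange law is the
key point: precomposed with the split epimorphism `T(e_P ⊗ 1)`, both of its sides reduce, via the
right module axiom of `p̌` at the unit object and the compatibility of `q̂` with `Ť₂`, to the same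
morphism. The induced action of `P ⊗ Q` is `q̂_P ≫ (e_P ⊗ 1)`, which the interchange law turns into
`p̌_Q ≫ (1 ⊗ e_Q)`. Precomposed with `T(e_P ⊗ e_Q)` it becomes
`T̂₂^{TP,Q} ≫ (μ_P ⊗ 1) ≫ (e_P ⊗ e_Q)`, because `q̂` is `T`-linear along `e_Q` and `e_P` is
associative, `T e_P ≫ e_P = μ_P ≫ e_P`; this composite is split epi, hence so is the action.
-/

open CategoryTheory Category MonoidalCategory

universe v u

variable {C : Type u} [Category.{v} C] [MonoidalCategory C]

namespace CategoryTheory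

instance isSplitEpi_whiskerRight {X Y : C} (f : X ⟶ Y) [IsSplitEpi f] (Z : C) :
    IsSplitEpi (f ▷ Z) :=
  inferInstanceAs (IsSplitEpi ((tensorRight Z).map f))

instance isSplitEpi_whiskerLeft (Z : C) {X Y : C} (f : X ⟶ Y) [IsSplitEpi f] :
    IsSplitEpi (Z ◁ f) :=
  inferInstanceAs (IsSplitEpi ((tensorLeft Z).map f))

theorem IsSplitEpi.of_comp {D : Type*} [Category D] {X Y Z : D} {g : X ⟶ Y} {f : Y ⟶ Z}
    (_ : IsSplitEpi (g ≫ f)) : IsSplitEpi f :=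
  IsSplitEpi.mk' ⟨section_ (g ≫ f) ≫ g, by simp⟩

end CategoryTheory

namespace MultiplierBimonad

/- `hat` and `check` stand for the paper's `T̂₂, q̂` and `Ť₂, q̌`. The multiplication
`μ_X : T²X ⟶ TX` is `hatAct T₀ (fun Y => Th₂ Y X)`. -/
variable {T : C ⥤ C} (T₀ : T.obj (𝟙_ C) ⟶ 𝟙_ C)
  (Th₂ : ∀ X Y : C, T.obj (X ⊗ T.obj Y) ⟶ T.obj X ⊗ T.obj Y)
  (Tc₂ : ∀ X Y : C, T.obj (T.obj X ⊗ Y) ⟶ T.obj X ⊗ T.obj Y)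
  {P Q : C}
  (ph : ∀ X : C, T.obj (X ⊗ P) ⟶ T.obj X ⊗ P) (pc : ∀ X : C, T.obj (P ⊗ X) ⟶ P ⊗ T.obj X)
  (qh : ∀ X : C, T.obj (X ⊗ Q) ⟶ T.obj X ⊗ Q) (qc : ∀ X : C, T.obj (Q ⊗ X) ⟶ Q ⊗ T.obj X)

def NaturalHat₂ : Prop :=
  ∀ {X X' Y Y' : C} (f : X ⟶ X') (g : Y ⟶ Y'),
    T.map (f ⊗ₘ T.map g) ≫ Th₂ X' Y' = Th₂ X Y ≫ (T.map f ⊗ₘ T.map g)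

def NaturalCheck₂ : Prop :=
  ∀ {X X' Y Y' : C} (f : X ⟶ X') (g : Y ⟶ Y'),
    T.map (T.map f ⊗ₘ g) ≫ Tc₂ X' Y' = Tc₂ X Y ≫ (T.map f ⊗ₘ T.map g)

def HatCounit : Prop :=
  ∀ X : C, Th₂ X (𝟙_ C) ≫ (T.obj X ◁ T₀) ≫ (ρ_ (T.obj X)).hom = T.map ((X ◁ T₀) ≫ (ρ_ X).hom)

def CheckCounit : Prop :=
  ∀ X : C, Tc₂ (𝟙_ C) X ≫ (T₀ ▷ T.obj X) ≫ (λ_ (T.obj X)).hom = T.map ((T₀ ▷ X) ≫ (λ_ X).hom)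

def NaturalHat : Prop :=
  ∀ {X X' : C} (f : X ⟶ X'), T.map (f ▷ Q) ≫ qh X' = qh X ≫ (T.map f ▷ Q)

def NaturalCheck : Prop :=
  ∀ {X X' : C} (f : X ⟶ X'), T.map (Q ◁ f) ≫ qc X' = qc X ≫ (Q ◁ T.map f)

def HatAssoc : Prop :=
  ∀ X Y : C,
    T.map ((X ◁ qh Y) ≫ (α_ X (T.obj Y) Q).inv) ≫ qh (X ⊗ T.obj Y) ≫ (Th₂ X Y ▷ Q) =
      Th₂ X (Y ⊗ Q) ≫ (T.obj X ◁ qh Y) ≫ (α_ (T.obj X) (T.obj Y) Q).inv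

def CheckAssoc : Prop :=
  ∀ X Y : C,
    T.map ((qc X ▷ Y) ≫ (α_ Q (T.obj X) Y).hom) ≫ qc (T.obj X ⊗ Y) ≫ (Q ◁ Tc₂ X Y) =
      Tc₂ (Q ⊗ X) Y ≫ (qc X ▷ T.obj Y) ≫ (α_ Q (T.obj X) (T.obj Y)).hom

def HatCheckCompat : Prop :=
  ∀ X Y : C,
    T.map (α_ (T.obj X) Y Q).inv ≫ qh (T.obj X ⊗ Y) ≫ (Tc₂ X Y ▷ Q) =
      Tc₂ X (Y ⊗ Q) ≫ (T.obj X ◁ qh Y) ≫ (α_ (T.obj X) (T.obj Y) Q).inv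

def CheckHatCompat : Prop :=
  ∀ X Y : C,
    qc (X ⊗ T.obj Y) ≫ (Q ◁ Th₂ X Y) =
      T.map (α_ Q X (T.obj Y)).inv ≫ Th₂ (Q ⊗ X) Y ≫ (qc X ▷ T.obj Y) ≫
        (α_ Q (T.obj X) (T.obj Y)).hom

def Interchange : Prop :=
  ∀ X : C,
    pc (X ⊗ Q) ≫ (P ◁ qh X) =
      T.map (α_ P X Q).inv ≫ qh (P ⊗ X) ≫ (pc X ▷ Q) ≫ (α_ P (T.obj X) Q).hom

def hatAct : T.obj Q ⟶ Q :=
  T.map (λ_ Q).inv ≫ qh (𝟙_ C) ≫ (T₀ ▷ Q) ≫ (λ_ Q).hom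

def checkAct : T.obj Q ⟶ Q :=
  T.map (ρ_ Q).inv ≫ qc (𝟙_ C) ≫ (Q ◁ T₀) ≫ (ρ_ Q).hom

def hatTensor (X : C) : T.obj (X ⊗ (P ⊗ Q)) ⟶ T.obj X ⊗ (P ⊗ Q) :=
  T.map (α_ X P Q).inv ≫ qh (X ⊗ P) ≫ (ph X ▷ Q) ≫ (α_ (T.obj X) P Q).hom

def checkTensor (X : C) : T.obj ((P ⊗ Q) ⊗ X) ⟶ (P ⊗ Q) ⊗ T.obj X :=
  T.map (α_ P Q X).hom ≫ pc (Q ⊗ X) ≫ (P ◁ qc X) ≫ (α_ P Q (T.obj X)).inv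

variable {T₀ Th₂ Tc₂ ph pc qh qc}

theorem NaturalHat₂.whiskerLeft (h : NaturalHat₂ Th₂) (X : C) {Y Y' : C} (g : Y ⟶ Y') :
    T.map (X ◁ T.map g) ≫ Th₂ X Y' = Th₂ X Y ≫ (T.obj X ◁ T.map g) := by
  simpa using h (𝟙 X) g

theorem NaturalHat₂.whiskerRight (h : NaturalHat₂ Th₂) {X X' : C} (f : X ⟶ X') (Y : C) :
    T.map (f ▷ T.obj Y) ≫ Th₂ X' Y = Th₂ X Y ≫ (T.map f ▷ T.obj Y) := by
  simpa using h f (𝟙 Y)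

theorem NaturalCheck₂.whiskerLeft (h : NaturalCheck₂ Tc₂) (X : C) {Y Y' : C} (g : Y ⟶ Y') :
    T.map (T.obj X ◁ g) ≫ Tc₂ X Y' = Tc₂ X Y ≫ (T.obj X ◁ T.map g) := by
  simpa using h (𝟙 X) g

theorem NaturalCheck₂.whiskerRight (h : NaturalCheck₂ Tc₂) {X X' : C} (f : X ⟶ X') (Y : C) :
    T.map (T.map f ▷ Y) ≫ Tc₂ X' Y = Tc₂ X Y ≫ (T.map f ▷ T.obj Y) := by
  simpa using h f (𝟙 Y)

theorem hatTensor_hatAssoc (hThnat : NaturalHat₂ Th₂) (hqhnat : NaturalHat qh)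
    (hph : HatAssoc Th₂ ph) (hqh : HatAssoc Th₂ qh) : HatAssoc Th₂ (hatTensor ph qh) := by
  intro X Y
  have coh₁ : T.map (X ◁ (ph Y ▷ Q)) ≫ T.map (X ◁ (α_ (T.obj Y) P Q).hom) ≫
      T.map (α_ X (T.obj Y) (P ⊗ Q)).inv ≫ T.map (α_ (X ⊗ T.obj Y) P Q).inv =
      T.map (α_ X (T.obj (Y ⊗ P)) Q).inv ≫ T.map ((X ◁ ph Y) ▷ Q) ≫
        T.map ((α_ X (T.obj Y) P).inv ▷ Q) := by
    simp only [← Functor.map_comp]; congr 1; monoidal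
  have coh₂ : (α_ (T.obj (X ⊗ T.obj Y)) P Q).hom ≫ (Th₂ X Y ▷ (P ⊗ Q)) =
      ((Th₂ X Y ▷ P) ▷ Q) ≫ (α_ (T.obj X ⊗ T.obj Y) P Q).hom := by monoidal
  have hphQ := congrArg (· ▷ Q) (hph X Y)
  simp only [Functor.map_comp, comp_whiskerRight, assoc] at hphQ
  have hqh' := hqh X (Y ⊗ P)
  simp only [Functor.map_comp, assoc] at hqh'
  simp only [hatTensor, Functor.map_comp, MonoidalCategory.whiskerLeft_comp, assoc]
  rw [reassoc_of% coh₁, reassoc_of% (hqhnat _), reassoc_of% (hqhnat _), coh₂,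
    reassoc_of% hphQ, reassoc_of% hqh', reassoc_of% (hThnat.whiskerLeft X (α_ Y P Q).inv)]
  monoidal

theorem hatTensor_hatCheckCompat (hTcnat : NaturalCheck₂ Tc₂) (hqhnat : NaturalHat qh)
    (hp : HatCheckCompat Tc₂ ph) (hq : HatCheckCompat Tc₂ qh) :
    HatCheckCompat Tc₂ (hatTensor ph qh) := by
  intro X Y
  have coh₁ : T.map (α_ (T.obj X) Y (P ⊗ Q)).inv ≫ T.map (α_ (T.obj X ⊗ Y) P Q).inv =
      T.map (T.obj X ◁ (α_ Y P Q).inv) ≫ T.map (α_ (T.obj X) (Y ⊗ P) Q).inv ≫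
        T.map ((α_ (T.obj X) Y P).inv ▷ Q) := by
    simp only [← Functor.map_comp]; congr 1; monoidal
  have coh₂ : (α_ (T.obj (T.obj X ⊗ Y)) P Q).hom ≫ (Tc₂ X Y ▷ (P ⊗ Q)) =
      ((Tc₂ X Y ▷ P) ▷ Q) ≫ (α_ (T.obj X ⊗ T.obj Y) P Q).hom := by monoidal
  have hpQ := congrArg (· ▷ Q) (hp X Y)
  simp only [comp_whiskerRight] at hpQ
  simp only [hatTensor, MonoidalCategory.whiskerLeft_comp, assoc]
  rw [reassoc_of% coh₁, reassoc_of% (hqhnat _), coh₂, reassoc_of% hpQ, reassoc_of% (hq X (Y ⊗ P)),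
    reassoc_of% (hTcnat.whiskerLeft X (α_ Y P Q).inv)]
  monoidal

theorem checkTensor_checkAssoc (hTcnat : NaturalCheck₂ Tc₂) (hpcnat : NaturalCheck pc)
    (hpc : CheckAssoc Tc₂ pc) (hqc : CheckAssoc Tc₂ qc) :
    CheckAssoc Tc₂ (checkTensor pc qc) := by
  intro X Y
  have coh₁ : T.map ((P ◁ qc X) ▷ Y) ≫ T.map ((α_ P Q (T.obj X)).inv ▷ Y) ≫
      T.map (α_ (P ⊗ Q) (T.obj X) Y).hom ≫ T.map (α_ P Q (T.obj X ⊗ Y)).hom =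
      T.map (α_ P (T.obj (Q ⊗ X)) Y).hom ≫ T.map (P ◁ (qc X ▷ Y)) ≫
        T.map (P ◁ (α_ Q (T.obj X) Y).hom) := by
    simp only [← Functor.map_comp]; congr 1; monoidal
  have coh₂ : (α_ P Q (T.obj (T.obj X ⊗ Y))).inv ≫ ((P ⊗ Q) ◁ Tc₂ X Y) =
      (P ◁ (Q ◁ Tc₂ X Y)) ≫ (α_ P Q (T.obj X ⊗ T.obj Y)).inv := by monoidal
  have hnat := hpcnat ((qc X ▷ Y) ≫ (α_ Q (T.obj X) Y).hom)
  simp only [Functor.map_comp, MonoidalCategory.whiskerLeft_comp, assoc] at hnat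
  have hqcP := congrArg (P ◁ ·) (hqc X Y)
  simp only [Functor.map_comp, MonoidalCategory.whiskerLeft_comp, assoc] at hqcP
  have hpc' := hpc (Q ⊗ X) Y
  simp only [Functor.map_comp, assoc] at hpc'
  simp only [checkTensor, Functor.map_comp, comp_whiskerRight, assoc]
  rw [coh₂, reassoc_of% coh₁, reassoc_of% hnat, reassoc_of% hqcP, reassoc_of% hpc',
    reassoc_of% (hTcnat.whiskerRight (α_ P Q X).hom Y)]
  monoidal

theorem checkTensor_checkHatCompat (hThnat : NaturalHat₂ Th₂) (hpcnat : NaturalCheck pc)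
    (hp : CheckHatCompat Th₂ pc) (hq : CheckHatCompat Th₂ qc) :
    CheckHatCompat Th₂ (checkTensor pc qc) := by
  intro X Y
  have coh₁ : (α_ P Q (T.obj (X ⊗ T.obj Y))).inv ≫ ((P ⊗ Q) ◁ Th₂ X Y) =
      (P ◁ (Q ◁ Th₂ X Y)) ≫ (α_ P Q (T.obj X ⊗ T.obj Y)).inv := by monoidal
  have coh₂ : T.map (α_ P Q (X ⊗ T.obj Y)).hom ≫ T.map (P ◁ (α_ Q X (T.obj Y)).inv) ≫
      T.map (α_ P (Q ⊗ X) (T.obj Y)).inv =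
      T.map (α_ (P ⊗ Q) X (T.obj Y)).inv ≫ T.map ((α_ P Q X).hom ▷ T.obj Y) := by
    simp only [← Functor.map_comp]; congr 1; monoidal
  have hqP := congrArg (P ◁ ·) (hq X Y)
  simp only [MonoidalCategory.whiskerLeft_comp] at hqP
  simp only [checkTensor, assoc]
  rw [coh₁, reassoc_of% hqP, ← reassoc_of% (hpcnat _), reassoc_of% (hp (Q ⊗ X) Y),
    reassoc_of% coh₂, reassoc_of% (hThnat.whiskerRight (α_ P Q X).hom Y)]
  monoidal

theorem map_whiskerLeft_hatAct_comp (hThnat : NaturalHat₂ Th₂) (hThcou : HatCounit T₀ Th₂)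
    (hqhnat : NaturalHat qh) (hqh : HatAssoc Th₂ qh) (X : C) :
    T.map (X ◁ hatAct T₀ qh) ≫ qh X = Th₂ X Q ≫ (T.obj X ◁ hatAct T₀ qh) := by
  have coh : T.map (X ◁ (T₀ ▷ Q)) ≫ T.map (X ◁ (λ_ Q).hom) =
      T.map (α_ X (T.obj (𝟙_ C)) Q).inv ≫ T.map ((X ◁ T₀) ▷ Q) ≫ T.map ((ρ_ X).hom ▷ Q) := by
    simp only [← Functor.map_comp]; congr 1; monoidal
  have hnat := hqhnat ((X ◁ T₀) ≫ (ρ_ X).hom)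
  rw [← hThcou X] at hnat
  simp only [Functor.map_comp, comp_whiskerRight, assoc] at hnat
  have hassoc := hqh X (𝟙_ C)
  simp only [Functor.map_comp, assoc] at hassoc
  simp only [hatAct, Functor.map_comp, MonoidalCategory.whiskerLeft_comp, assoc]
  rw [reassoc_of% coh, hnat, reassoc_of% hassoc, reassoc_of% (hThnat.whiskerLeft X (λ_ Q).inv)]
  monoidal

theorem map_checkAct_whiskerRight_comp (hTcnat : NaturalCheck₂ Tc₂)
    (hTccou : CheckCounit T₀ Tc₂) (hpcnat : NaturalCheck pc) (hpc : CheckAssoc Tc₂ pc)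
    (Y : C) : T.map (checkAct T₀ pc ▷ Y) ≫ pc Y = Tc₂ P Y ≫ (checkAct T₀ pc ▷ T.obj Y) := by
  have coh : T.map ((P ◁ T₀) ▷ Y) ≫ T.map ((ρ_ P).hom ▷ Y) =
      T.map (α_ P (T.obj (𝟙_ C)) Y).hom ≫ T.map (P ◁ (T₀ ▷ Y)) ≫ T.map (P ◁ (λ_ Y).hom) := by
    simp only [← Functor.map_comp]; congr 1; monoidal
  have hnat := hpcnat ((T₀ ▷ Y) ≫ (λ_ Y).hom)
  rw [← hTccou Y] at hnat
  simp only [Functor.map_comp, MonoidalCategory.whiskerLeft_comp, assoc] at hnat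
  have hassoc := hpc (𝟙_ C) Y
  simp only [Functor.map_comp, assoc] at hassoc
  simp only [checkAct, Functor.map_comp, comp_whiskerRight, assoc]
  rw [reassoc_of% coh, hnat, reassoc_of% hassoc, reassoc_of% (hTcnat.whiskerRight (ρ_ P).inv Y)]
  monoidal

theorem interchange (hTcnat : NaturalCheck₂ Tc₂) (hTccou : CheckCounit T₀ Tc₂)
    (hpcnat : NaturalCheck pc) (hpc : CheckAssoc Tc₂ pc) (hpe : IsSplitEpi (checkAct T₀ pc))
    (hqhnat : NaturalHat qh) (hq : HatCheckCompat Tc₂ qh) : Interchange pc qh := by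
  intro X
  rw [← cancel_epi (T.map (checkAct T₀ pc ▷ (X ⊗ Q)))]
  have coh : T.map (checkAct T₀ pc ▷ (X ⊗ Q)) ≫ T.map (α_ P X Q).inv =
      T.map (α_ (T.obj P) X Q).inv ≫ T.map ((checkAct T₀ pc ▷ X) ▷ Q) := by
    simp only [← Functor.map_comp]; congr 1; monoidal
  have hstar := congrArg (· ▷ Q) (map_checkAct_whiskerRight_comp hTcnat hTccou hpcnat hpc X)
  simp only [comp_whiskerRight] at hstar
  rw [reassoc_of% coh, reassoc_of% (hqhnat _), reassoc_of% hstar, reassoc_of% (hq P X),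
    reassoc_of% (map_checkAct_whiskerRight_comp hTcnat hTccou hpcnat hpc (X ⊗ Q)),
    ← whisker_exchange]
  monoidal

theorem hatAct_hatTensor (hqhnat : NaturalHat qh) :
    hatAct T₀ (hatTensor ph qh) = qh P ≫ (hatAct T₀ ph ▷ Q) := by
  have coh : T.map (λ_ (P ⊗ Q)).inv ≫ T.map (α_ (𝟙_ C) P Q).inv = T.map ((λ_ P).inv ▷ Q) := by
    simp only [← T.map_comp]; congr 1; monoidal
  simp only [hatAct, hatTensor, comp_whiskerRight, assoc]
  rw [reassoc_of% coh, reassoc_of% (hqhnat _)]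
  monoidal

theorem checkAct_checkTensor (hpcnat : NaturalCheck pc) :
    checkAct T₀ (checkTensor pc qc) = pc Q ≫ (P ◁ checkAct T₀ qc) := by
  have coh : T.map (ρ_ (P ⊗ Q)).inv ≫ T.map (α_ P Q (𝟙_ C)).hom = T.map (P ◁ (ρ_ Q).inv) := by
    simp only [← T.map_comp]; congr 1; monoidal
  simp only [checkAct, checkTensor, MonoidalCategory.whiskerLeft_comp, assoc]
  rw [reassoc_of% coh, reassoc_of% (hpcnat _)]
  monoidal

theorem hat_comp_checkAct_whiskerRight (hinter : Interchange pc qh) (hqhnat : NaturalHat qh)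
    (hpcnat : NaturalCheck pc) : qh P ≫ (checkAct T₀ pc ▷ Q) = pc Q ≫ (P ◁ hatAct T₀ qh) := by
  have hinter₀ : T.map (α_ P (𝟙_ C) Q).hom ≫ pc (𝟙_ C ⊗ Q) ≫ (P ◁ qh (𝟙_ C)) ≫
      (α_ P (T.obj (𝟙_ C)) Q).inv = qh (P ⊗ 𝟙_ C) ≫ (pc (𝟙_ C) ▷ Q) := by
    rw [reassoc_of% (hinter (𝟙_ C)), ← T.map_comp_assoc]
    simp
  have coh : T.map ((ρ_ P).inv ▷ Q) ≫ T.map (α_ P (𝟙_ C) Q).hom = T.map (P ◁ (λ_ Q).inv) := by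
    simp only [← T.map_comp]; congr 1; monoidal
  simp only [checkAct, hatAct, comp_whiskerRight, MonoidalCategory.whiskerLeft_comp]
  rw [← reassoc_of% (hqhnat (ρ_ P).inv), ← reassoc_of% hinter₀, reassoc_of% coh,
    reassoc_of% (hpcnat _)]
  monoidal

theorem hatAct_hatTensor_eq_checkAct_checkTensor (hinter : Interchange pc qh)
    (hqhnat : NaturalHat qh) (hpcnat : NaturalCheck pc)
    (hp : hatAct T₀ ph = checkAct T₀ pc) (hq : hatAct T₀ qh = checkAct T₀ qc) :
    hatAct T₀ (hatTensor ph qh) = checkAct T₀ (checkTensor pc qc) := by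
  rw [hatAct_hatTensor hqhnat, checkAct_checkTensor hpcnat, hp,
    hat_comp_checkAct_whiskerRight hinter hqhnat hpcnat, hq]

theorem map_hatAct_comp_hatAct (hThnat : NaturalHat₂ Th₂) (hThcou : HatCounit T₀ Th₂)
    (hphnat : NaturalHat ph) (hph : HatAssoc Th₂ ph) :
    T.map (hatAct T₀ ph) ≫ hatAct T₀ ph = hatAct T₀ (fun Y => Th₂ Y P) ≫ hatAct T₀ ph := by
  have hlin := map_whiskerLeft_hatAct_comp hThnat hThcou hphnat hph (𝟙_ C)
  conv_lhs => arg 2; unfold hatAct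
  conv_rhs => arg 1; unfold hatAct
  rw [← T.map_comp_assoc, leftUnitor_inv_naturality, T.map_comp_assoc, reassoc_of% hlin]
  simp only [assoc]
  rw [whisker_exchange_assoc, leftUnitor_naturality]

theorem isSplitEpi_hat_comp_hatAct_whiskerRight (hThnat : NaturalHat₂ Th₂)
    (hThcou : HatCounit T₀ Th₂) (hphnat : NaturalHat ph) (hph : HatAssoc Th₂ ph)
    (hqhnat : NaturalHat qh) (hqh : HatAssoc Th₂ qh) (hpe : IsSplitEpi (hatAct T₀ ph))
    (hqe : IsSplitEpi (hatAct T₀ qh))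
    (hμ : IsSplitEpi (Th₂ (T.obj P) Q ≫ (hatAct T₀ (fun Y => Th₂ Y P) ▷ T.obj Q))) :
    IsSplitEpi (qh P ≫ (hatAct T₀ ph ▷ Q)) := by
  refine IsSplitEpi.of_comp (g := T.map ((hatAct T₀ ph ▷ T.obj Q) ≫ (P ◁ hatAct T₀ qh))) ?_
  have key : T.map ((hatAct T₀ ph ▷ T.obj Q) ≫ (P ◁ hatAct T₀ qh)) ≫ qh P ≫
      (hatAct T₀ ph ▷ Q) = (Th₂ (T.obj P) Q ≫ (hatAct T₀ (fun Y => Th₂ Y P) ▷ T.obj Q)) ≫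
        (hatAct T₀ ph ▷ T.obj Q) ≫ (P ◁ hatAct T₀ qh) := by
    rw [T.map_comp, assoc, reassoc_of% (map_whiskerLeft_hatAct_comp hThnat hThcou hqhnat hqh P),
      whisker_exchange, reassoc_of% (hThnat.whiskerRight (hatAct T₀ ph) Q),
      ← comp_whiskerRight_assoc, map_hatAct_comp_hatAct hThnat hThcou hphnat hph,
      comp_whiskerRight_assoc, assoc]
  rw [key]
  infer_instance

end MultiplierBimonad

theorem module_tensor_of_multiplierBimonad_general
    (T : C ⥤ C)
    (Th₂ : ∀ X Y : C, T.obj (X ⊗ T.obj Y) ⟶ T.obj X ⊗ T.obj Y)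
    (Tc₂ : ∀ X Y : C, T.obj (T.obj X ⊗ Y) ⟶ T.obj X ⊗ T.obj Y)
    (T₀ : T.obj (𝟙_ C) ⟶ 𝟙_ C)
    -- naturality
    (hThnat : ∀ {X X' Y Y' : C} (f : X ⟶ X') (g : Y ⟶ Y'),
      T.map (f ⊗ₘ T.map g) ≫ Th₂ X' Y' = Th₂ X Y ≫ (T.map f ⊗ₘ T.map g))
    (hTcnat : ∀ {X X' Y Y' : C} (f : X ⟶ X') (g : Y ⟶ Y'),
      T.map (T.map f ⊗ₘ g) ≫ Tc₂ X' Y' = Tc₂ X Y ≫ (T.map f ⊗ₘ T.map g))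
    -- left multiplier bimonad axioms for `T̂₂`
    (hThcou : ∀ X : C,
      Th₂ X (𝟙_ C) ≫ (T.obj X ◁ T₀) ≫ (ρ_ (T.obj X)).hom =
        T.map ((X ◁ T₀) ≫ (ρ_ X).hom))
    -- right multiplier bimonad axioms for `Ť₂`
    (hTccou : ∀ X : C,
      Tc₂ (𝟙_ C) X ≫ (T₀ ▷ T.obj X) ≫ (λ_ (T.obj X)).hom =
        T.map ((T₀ ▷ X) ≫ (λ_ X).hom))
    -- the split-epimorphism assumptions
    (hsplith : ∀ X Y : C, IsSplitEpi
      (Th₂ (T.obj X) Y ≫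
        ((T.map (λ_ (T.obj X)).inv ≫ Th₂ (𝟙_ C) X ≫ (T₀ ▷ T.obj X) ≫
          (λ_ (T.obj X)).hom) ▷ T.obj Y)))
    -- a module `(Q, q̂, q̌)`
    (Q : C)
    (qh : ∀ X : C, T.obj (X ⊗ Q) ⟶ T.obj X ⊗ Q)
    (qc : ∀ X : C, T.obj (Q ⊗ X) ⟶ Q ⊗ T.obj X)
    (hqhnat : ∀ {X X' : C} (f : X ⟶ X'),
      T.map (f ▷ Q) ≫ qh X' = qh X ≫ (T.map f ▷ Q))
    (hqh : ∀ X Y : C,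
      T.map ((X ◁ qh Y) ≫ (α_ X (T.obj Y) Q).inv) ≫ qh (X ⊗ T.obj Y) ≫
          (Th₂ X Y ▷ Q) =
        Th₂ X (Y ⊗ Q) ≫ (T.obj X ◁ qh Y) ≫ (α_ (T.obj X) (T.obj Y) Q).inv)
    (hqc : ∀ X Y : C,
      T.map ((qc X ▷ Y) ≫ (α_ Q (T.obj X) Y).hom) ≫ qc (T.obj X ⊗ Y) ≫
          (Q ◁ Tc₂ X Y) =
        Tc₂ (Q ⊗ X) Y ≫ (qc X ▷ T.obj Y) ≫ (α_ Q (T.obj X) (T.obj Y)).hom)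
    (hqcompat₁ : ∀ X Y : C,
      T.map (α_ (T.obj X) Y Q).inv ≫ qh (T.obj X ⊗ Y) ≫ (Tc₂ X Y ▷ Q) =
        Tc₂ X (Y ⊗ Q) ≫ (T.obj X ◁ qh Y) ≫ (α_ (T.obj X) (T.obj Y) Q).inv)
    (hqcompat₂ : ∀ X Y : C,
      qc (X ⊗ T.obj Y) ≫ (Q ◁ Th₂ X Y) =
        T.map (α_ Q X (T.obj Y)).inv ≫ Th₂ (Q ⊗ X) Y ≫ (qc X ▷ T.obj Y) ≫
          (α_ Q (T.obj X) (T.obj Y)).hom)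
    (hqact : T.map (λ_ Q).inv ≫ qh (𝟙_ C) ≫ (T₀ ▷ Q) ≫ (λ_ Q).hom =
      T.map (ρ_ Q).inv ≫ qc (𝟙_ C) ≫ (Q ◁ T₀) ≫ (ρ_ Q).hom)
    (hqe : IsSplitEpi (T.map (λ_ Q).inv ≫ qh (𝟙_ C) ≫ (T₀ ▷ Q) ≫ (λ_ Q).hom))
    -- a module `(P, p̂, p̌)`
    (P : C)
    (ph : ∀ X : C, T.obj (X ⊗ P) ⟶ T.obj X ⊗ P)
    (pc : ∀ X : C, T.obj (P ⊗ X) ⟶ P ⊗ T.obj X)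
    (hphnat : ∀ {X X' : C} (f : X ⟶ X'),
      T.map (f ▷ P) ≫ ph X' = ph X ≫ (T.map f ▷ P))
    (hpcnat : ∀ {X X' : C} (f : X ⟶ X'),
      T.map (P ◁ f) ≫ pc X' = pc X ≫ (P ◁ T.map f))
    (hph : ∀ X Y : C,
      T.map ((X ◁ ph Y) ≫ (α_ X (T.obj Y) P).inv) ≫ ph (X ⊗ T.obj Y) ≫
          (Th₂ X Y ▷ P) =
        Th₂ X (Y ⊗ P) ≫ (T.obj X ◁ ph Y) ≫ (α_ (T.obj X) (T.obj Y) P).inv)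
    (hpc : ∀ X Y : C,
      T.map ((pc X ▷ Y) ≫ (α_ P (T.obj X) Y).hom) ≫ pc (T.obj X ⊗ Y) ≫
          (P ◁ Tc₂ X Y) =
        Tc₂ (P ⊗ X) Y ≫ (pc X ▷ T.obj Y) ≫ (α_ P (T.obj X) (T.obj Y)).hom)
    (hpcompat₁ : ∀ X Y : C,
      T.map (α_ (T.obj X) Y P).inv ≫ ph (T.obj X ⊗ Y) ≫ (Tc₂ X Y ▷ P) =
        Tc₂ X (Y ⊗ P) ≫ (T.obj X ◁ ph Y) ≫ (α_ (T.obj X) (T.obj Y) P).inv)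
    (hpcompat₂ : ∀ X Y : C,
      pc (X ⊗ T.obj Y) ≫ (P ◁ Th₂ X Y) =
        T.map (α_ P X (T.obj Y)).inv ≫ Th₂ (P ⊗ X) Y ≫ (pc X ▷ T.obj Y) ≫
          (α_ P (T.obj X) (T.obj Y)).hom)
    (hpact : T.map (λ_ P).inv ≫ ph (𝟙_ C) ≫ (T₀ ▷ P) ≫ (λ_ P).hom =
      T.map (ρ_ P).inv ≫ pc (𝟙_ C) ≫ (P ◁ T₀) ≫ (ρ_ P).hom)
    (hpe : IsSplitEpi (T.map (λ_ P).inv ≫ ph (𝟙_ C) ≫ (T₀ ▷ P) ≫ (λ_ P).hom))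
    -- the candidate module structure on `P ⊗ Q`
    (rh : ∀ X : C, T.obj (X ⊗ (P ⊗ Q)) ⟶ T.obj X ⊗ (P ⊗ Q))
    (hrh : ∀ X : C, rh X =
      T.map (α_ X P Q).inv ≫ qh (X ⊗ P) ≫ (ph X ▷ Q) ≫ (α_ (T.obj X) P Q).hom)
    (rc : ∀ X : C, T.obj ((P ⊗ Q) ⊗ X) ⟶ (P ⊗ Q) ⊗ T.obj X)
    (hrc : ∀ X : C, rc X =
      T.map (α_ P Q X).hom ≫ pc (Q ⊗ X) ≫ (P ◁ qc X) ≫ (α_ P Q (T.obj X)).inv) :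
    -- `(P ⊗ Q, r̂)` is a module over the left multiplier bimonad
    (∀ X Y : C,
      T.map ((X ◁ rh Y) ≫ (α_ X (T.obj Y) (P ⊗ Q)).inv) ≫ rh (X ⊗ T.obj Y) ≫
          (Th₂ X Y ▷ (P ⊗ Q)) =
        Th₂ X (Y ⊗ (P ⊗ Q)) ≫ (T.obj X ◁ rh Y) ≫
          (α_ (T.obj X) (T.obj Y) (P ⊗ Q)).inv) ∧
    -- `(P ⊗ Q, ř)` is a module over the right multiplier bimonad
    (∀ X Y : C,
      T.map ((rc X ▷ Y) ≫ (α_ (P ⊗ Q) (T.obj X) Y).hom) ≫ rc (T.obj X ⊗ Y) ≫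
          ((P ⊗ Q) ◁ Tc₂ X Y) =
        Tc₂ ((P ⊗ Q) ⊗ X) Y ≫ (rc X ▷ T.obj Y) ≫
          (α_ (P ⊗ Q) (T.obj X) (T.obj Y)).hom) ∧
    -- the compatibility conditions of a module hold for `(r̂, ř)`
    (∀ X Y : C,
      T.map (α_ (T.obj X) Y (P ⊗ Q)).inv ≫ rh (T.obj X ⊗ Y) ≫
          (Tc₂ X Y ▷ (P ⊗ Q)) =
        Tc₂ X (Y ⊗ (P ⊗ Q)) ≫ (T.obj X ◁ rh Y) ≫
          (α_ (T.obj X) (T.obj Y) (P ⊗ Q)).inv) ∧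
    (∀ X Y : C,
      rc (X ⊗ T.obj Y) ≫ ((P ⊗ Q) ◁ Th₂ X Y) =
        T.map (α_ (P ⊗ Q) X (T.obj Y)).inv ≫ Th₂ ((P ⊗ Q) ⊗ X) Y ≫
          (rc X ▷ T.obj Y) ≫ (α_ (P ⊗ Q) (T.obj X) (T.obj Y)).hom) ∧
    -- the interchange law `p̌_{X⊗Q} ≫ (1_P ⊗ q̂_X) = q̂_{P⊗X} ≫ (p̌_X ⊗ 1_Q)`
    (∀ X : C,
      pc (X ⊗ Q) ≫ (P ◁ qh X) =
        T.map (α_ P X Q).inv ≫ qh (P ⊗ X) ≫ (pc X ▷ Q) ≫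
          (α_ P (T.obj X) Q).hom) ∧
    -- the two induced actions on `P ⊗ Q` agree, and they form a split epimorphism
    (T.map (λ_ (P ⊗ Q)).inv ≫ rh (𝟙_ C) ≫ (T₀ ▷ (P ⊗ Q)) ≫ (λ_ (P ⊗ Q)).hom =
      T.map (ρ_ (P ⊗ Q)).inv ≫ rc (𝟙_ C) ≫ ((P ⊗ Q) ◁ T₀) ≫ (ρ_ (P ⊗ Q)).hom) ∧
    IsSplitEpi
      (T.map (λ_ (P ⊗ Q)).inv ≫ rh (𝟙_ C) ≫ (T₀ ▷ (P ⊗ Q)) ≫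
        (λ_ (P ⊗ Q)).hom) := by
  obtain rfl : rh = MultiplierBimonad.hatTensor ph qh := funext hrh
  obtain rfl : rc = MultiplierBimonad.checkTensor pc qc := funext hrc
  have hpe' : IsSplitEpi (MultiplierBimonad.checkAct T₀ pc) := by rwa [hpact] at hpe
  have hinter := MultiplierBimonad.interchange hTcnat hTccou hpcnat hpc hpe' hqhnat hqcompat₁
  refine ⟨MultiplierBimonad.hatTensor_hatAssoc hThnat hqhnat hph hqh,
    MultiplierBimonad.checkTensor_checkAssoc hTcnat hpcnat hpc hqc,
    MultiplierBimonad.hatTensor_hatCheckCompat hTcnat hqhnat hpcompat₁ hqcompat₁,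
    MultiplierBimonad.checkTensor_checkHatCompat hThnat hpcnat hpcompat₂ hqcompat₂, hinter,
    MultiplierBimonad.hatAct_hatTensor_eq_checkAct_checkTensor hinter hqhnat hpcnat hpact hqact,
    ?_⟩
  have hsplit := MultiplierBimonad.isSplitEpi_hat_comp_hatAct_whiskerRight hThnat hThcou hphnat
    hph hqhnat hqh hpe hqe (hsplith P Q)
  rwa [← MultiplierBimonad.hatAct_hatTensor hqhnat] at hsplit

/-- The monoidal product of two modules over a multiplier bimonad
`(T, T̂₂, Ť₂, T₀)` is again a module, via
`r̂_X := q̂_{X⊗P} ≫ (p̂_X ⊗ 1_Q)` and `ř_X := p̌_{Q⊗X} ≫ (1_P ⊗ q̌_X)`;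
in particular the interchange law `p̌_{X⊗Q} ≫ (1_P ⊗ q̂_X) = q̂_{P⊗X} ≫ (p̌_X ⊗ 1_Q)`
holds, the two induced actions of `T` on `P ⊗ Q` agree, and this common action is
a split epimorphism. -/
theorem module_tensor_of_multiplierBimonad
    (T : C ⥤ C)
    (Th₂ : ∀ X Y : C, T.obj (X ⊗ T.obj Y) ⟶ T.obj X ⊗ T.obj Y)
    (Tc₂ : ∀ X Y : C, T.obj (T.obj X ⊗ Y) ⟶ T.obj X ⊗ T.obj Y)
    (T₀ : T.obj (𝟙_ C) ⟶ 𝟙_ C)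
    -- naturality
    (hThnat : ∀ {X X' Y Y' : C} (f : X ⟶ X') (g : Y ⟶ Y'),
      T.map (f ⊗ₘ T.map g) ≫ Th₂ X' Y' = Th₂ X Y ≫ (T.map f ⊗ₘ T.map g))
    (hTcnat : ∀ {X X' Y Y' : C} (f : X ⟶ X') (g : Y ⟶ Y'),
      T.map (T.map f ⊗ₘ g) ≫ Tc₂ X' Y' = Tc₂ X Y ≫ (T.map f ⊗ₘ T.map g))
    -- left multiplier bimonad axioms for `T̂₂`
    (hThassoc : ∀ X Y Z : C,
      T.map ((X ◁ Th₂ Y Z) ≫ (α_ X (T.obj Y) (T.obj Z)).inv) ≫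
          Th₂ (X ⊗ T.obj Y) Z ≫ (Th₂ X Y ▷ T.obj Z) =
        Th₂ X (Y ⊗ T.obj Z) ≫ (T.obj X ◁ Th₂ Y Z) ≫
          (α_ (T.obj X) (T.obj Y) (T.obj Z)).inv)
    (hThcou : ∀ X : C,
      Th₂ X (𝟙_ C) ≫ (T.obj X ◁ T₀) ≫ (ρ_ (T.obj X)).hom =
        T.map ((X ◁ T₀) ≫ (ρ_ X).hom))
    -- right multiplier bimonad axioms for `Ť₂`
    (hTcassoc : ∀ X Y Z : C,
      T.map ((Tc₂ X Y ▷ Z) ≫ (α_ (T.obj X) (T.obj Y) Z).hom) ≫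
          Tc₂ X (T.obj Y ⊗ Z) ≫ (T.obj X ◁ Tc₂ Y Z) =
        Tc₂ (T.obj X ⊗ Y) Z ≫ (Tc₂ X Y ▷ T.obj Z) ≫
          (α_ (T.obj X) (T.obj Y) (T.obj Z)).hom)
    (hTccou : ∀ X : C,
      Tc₂ (𝟙_ C) X ≫ (T₀ ▷ T.obj X) ≫ (λ_ (T.obj X)).hom =
        T.map ((T₀ ▷ X) ≫ (λ_ X).hom))
    -- the compatibility conditions of a multiplier bimonad
    (hTcompat : ∀ X Y Z : C,
      Tc₂ X (Y ⊗ T.obj Z) ≫ (T.obj X ◁ Th₂ Y Z) =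
        T.map (α_ (T.obj X) Y (T.obj Z)).inv ≫ Th₂ (T.obj X ⊗ Y) Z ≫
          (Tc₂ X Y ▷ T.obj Z) ≫ (α_ (T.obj X) (T.obj Y) (T.obj Z)).hom)
    (hTmu : ∀ X : C,
      T.map (λ_ (T.obj X)).inv ≫ Th₂ (𝟙_ C) X ≫ (T₀ ▷ T.obj X) ≫
          (λ_ (T.obj X)).hom =
        T.map (ρ_ (T.obj X)).inv ≫ Tc₂ X (𝟙_ C) ≫ (T.obj X ◁ T₀) ≫
          (ρ_ (T.obj X)).hom)
    -- the split-epimorphism assumptions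
    (hT₀ : IsSplitEpi T₀)
    (hsplith : ∀ X Y : C, IsSplitEpi
      (Th₂ (T.obj X) Y ≫
        ((T.map (λ_ (T.obj X)).inv ≫ Th₂ (𝟙_ C) X ≫ (T₀ ▷ T.obj X) ≫
          (λ_ (T.obj X)).hom) ▷ T.obj Y)))
    (hsplitc : ∀ X Y : C, IsSplitEpi
      (Tc₂ X (T.obj Y) ≫
        (T.obj X ◁ (T.map (ρ_ (T.obj Y)).inv ≫ Tc₂ Y (𝟙_ C) ≫
          (T.obj Y ◁ T₀) ≫ (ρ_ (T.obj Y)).hom))))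
    -- a module `(Q, q̂, q̌)`
    (Q : C)
    (qh : ∀ X : C, T.obj (X ⊗ Q) ⟶ T.obj X ⊗ Q)
    (qc : ∀ X : C, T.obj (Q ⊗ X) ⟶ Q ⊗ T.obj X)
    (hqhnat : ∀ {X X' : C} (f : X ⟶ X'),
      T.map (f ▷ Q) ≫ qh X' = qh X ≫ (T.map f ▷ Q))
    (hqcnat : ∀ {X X' : C} (f : X ⟶ X'),
      T.map (Q ◁ f) ≫ qc X' = qc X ≫ (Q ◁ T.map f))
    (hqh : ∀ X Y : C,
      T.map ((X ◁ qh Y) ≫ (α_ X (T.obj Y) Q).inv) ≫ qh (X ⊗ T.obj Y) ≫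
          (Th₂ X Y ▷ Q) =
        Th₂ X (Y ⊗ Q) ≫ (T.obj X ◁ qh Y) ≫ (α_ (T.obj X) (T.obj Y) Q).inv)
    (hqc : ∀ X Y : C,
      T.map ((qc X ▷ Y) ≫ (α_ Q (T.obj X) Y).hom) ≫ qc (T.obj X ⊗ Y) ≫
          (Q ◁ Tc₂ X Y) =
        Tc₂ (Q ⊗ X) Y ≫ (qc X ▷ T.obj Y) ≫ (α_ Q (T.obj X) (T.obj Y)).hom)
    (hqcompat₁ : ∀ X Y : C,
      T.map (α_ (T.obj X) Y Q).inv ≫ qh (T.obj X ⊗ Y) ≫ (Tc₂ X Y ▷ Q) =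
        Tc₂ X (Y ⊗ Q) ≫ (T.obj X ◁ qh Y) ≫ (α_ (T.obj X) (T.obj Y) Q).inv)
    (hqcompat₂ : ∀ X Y : C,
      qc (X ⊗ T.obj Y) ≫ (Q ◁ Th₂ X Y) =
        T.map (α_ Q X (T.obj Y)).inv ≫ Th₂ (Q ⊗ X) Y ≫ (qc X ▷ T.obj Y) ≫
          (α_ Q (T.obj X) (T.obj Y)).hom)
    (hqact : T.map (λ_ Q).inv ≫ qh (𝟙_ C) ≫ (T₀ ▷ Q) ≫ (λ_ Q).hom =
      T.map (ρ_ Q).inv ≫ qc (𝟙_ C) ≫ (Q ◁ T₀) ≫ (ρ_ Q).hom)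
    (hqe : IsSplitEpi (T.map (λ_ Q).inv ≫ qh (𝟙_ C) ≫ (T₀ ▷ Q) ≫ (λ_ Q).hom))
    -- a module `(P, p̂, p̌)`
    (P : C)
    (ph : ∀ X : C, T.obj (X ⊗ P) ⟶ T.obj X ⊗ P)
    (pc : ∀ X : C, T.obj (P ⊗ X) ⟶ P ⊗ T.obj X)
    (hphnat : ∀ {X X' : C} (f : X ⟶ X'),
      T.map (f ▷ P) ≫ ph X' = ph X ≫ (T.map f ▷ P))
    (hpcnat : ∀ {X X' : C} (f : X ⟶ X'),
      T.map (P ◁ f) ≫ pc X' = pc X ≫ (P ◁ T.map f))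
    (hph : ∀ X Y : C,
      T.map ((X ◁ ph Y) ≫ (α_ X (T.obj Y) P).inv) ≫ ph (X ⊗ T.obj Y) ≫
          (Th₂ X Y ▷ P) =
        Th₂ X (Y ⊗ P) ≫ (T.obj X ◁ ph Y) ≫ (α_ (T.obj X) (T.obj Y) P).inv)
    (hpc : ∀ X Y : C,
      T.map ((pc X ▷ Y) ≫ (α_ P (T.obj X) Y).hom) ≫ pc (T.obj X ⊗ Y) ≫
          (P ◁ Tc₂ X Y) =
        Tc₂ (P ⊗ X) Y ≫ (pc X ▷ T.obj Y) ≫ (α_ P (T.obj X) (T.obj Y)).hom)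
    (hpcompat₁ : ∀ X Y : C,
      T.map (α_ (T.obj X) Y P).inv ≫ ph (T.obj X ⊗ Y) ≫ (Tc₂ X Y ▷ P) =
        Tc₂ X (Y ⊗ P) ≫ (T.obj X ◁ ph Y) ≫ (α_ (T.obj X) (T.obj Y) P).inv)
    (hpcompat₂ : ∀ X Y : C,
      pc (X ⊗ T.obj Y) ≫ (P ◁ Th₂ X Y) =
        T.map (α_ P X (T.obj Y)).inv ≫ Th₂ (P ⊗ X) Y ≫ (pc X ▷ T.obj Y) ≫
          (α_ P (T.obj X) (T.obj Y)).hom)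
    (hpact : T.map (λ_ P).inv ≫ ph (𝟙_ C) ≫ (T₀ ▷ P) ≫ (λ_ P).hom =
      T.map (ρ_ P).inv ≫ pc (𝟙_ C) ≫ (P ◁ T₀) ≫ (ρ_ P).hom)
    (hpe : IsSplitEpi (T.map (λ_ P).inv ≫ ph (𝟙_ C) ≫ (T₀ ▷ P) ≫ (λ_ P).hom))
    -- the candidate module structure on `P ⊗ Q`
    (rh : ∀ X : C, T.obj (X ⊗ (P ⊗ Q)) ⟶ T.obj X ⊗ (P ⊗ Q))
    (hrh : ∀ X : C, rh X =
      T.map (α_ X P Q).inv ≫ qh (X ⊗ P) ≫ (ph X ▷ Q) ≫ (α_ (T.obj X) P Q).hom)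
    (rc : ∀ X : C, T.obj ((P ⊗ Q) ⊗ X) ⟶ (P ⊗ Q) ⊗ T.obj X)
    (hrc : ∀ X : C, rc X =
      T.map (α_ P Q X).hom ≫ pc (Q ⊗ X) ≫ (P ◁ qc X) ≫ (α_ P Q (T.obj X)).inv) :
    -- `(P ⊗ Q, r̂)` is a module over the left multiplier bimonad
    (∀ X Y : C,
      T.map ((X ◁ rh Y) ≫ (α_ X (T.obj Y) (P ⊗ Q)).inv) ≫ rh (X ⊗ T.obj Y) ≫
          (Th₂ X Y ▷ (P ⊗ Q)) =
        Th₂ X (Y ⊗ (P ⊗ Q)) ≫ (T.obj X ◁ rh Y) ≫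
          (α_ (T.obj X) (T.obj Y) (P ⊗ Q)).inv) ∧
    -- `(P ⊗ Q, ř)` is a module over the right multiplier bimonad
    (∀ X Y : C,
      T.map ((rc X ▷ Y) ≫ (α_ (P ⊗ Q) (T.obj X) Y).hom) ≫ rc (T.obj X ⊗ Y) ≫
          ((P ⊗ Q) ◁ Tc₂ X Y) =
        Tc₂ ((P ⊗ Q) ⊗ X) Y ≫ (rc X ▷ T.obj Y) ≫
          (α_ (P ⊗ Q) (T.obj X) (T.obj Y)).hom) ∧
    -- the compatibility conditions of a module hold for `(r̂, ř)`
    (∀ X Y : C,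
      T.map (α_ (T.obj X) Y (P ⊗ Q)).inv ≫ rh (T.obj X ⊗ Y) ≫
          (Tc₂ X Y ▷ (P ⊗ Q)) =
        Tc₂ X (Y ⊗ (P ⊗ Q)) ≫ (T.obj X ◁ rh Y) ≫
          (α_ (T.obj X) (T.obj Y) (P ⊗ Q)).inv) ∧
    (∀ X Y : C,
      rc (X ⊗ T.obj Y) ≫ ((P ⊗ Q) ◁ Th₂ X Y) =
        T.map (α_ (P ⊗ Q) X (T.obj Y)).inv ≫ Th₂ ((P ⊗ Q) ⊗ X) Y ≫
          (rc X ▷ T.obj Y) ≫ (α_ (P ⊗ Q) (T.obj X) (T.obj Y)).hom) ∧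
    -- the interchange law `p̌_{X⊗Q} ≫ (1_P ⊗ q̂_X) = q̂_{P⊗X} ≫ (p̌_X ⊗ 1_Q)`
    (∀ X : C,
      pc (X ⊗ Q) ≫ (P ◁ qh X) =
        T.map (α_ P X Q).inv ≫ qh (P ⊗ X) ≫ (pc X ▷ Q) ≫
          (α_ P (T.obj X) Q).hom) ∧
    -- the two induced actions on `P ⊗ Q` agree, and they form a split epimorphism
    (T.map (λ_ (P ⊗ Q)).inv ≫ rh (𝟙_ C) ≫ (T₀ ▷ (P ⊗ Q)) ≫ (λ_ (P ⊗ Q)).hom =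
      T.map (ρ_ (P ⊗ Q)).inv ≫ rc (𝟙_ C) ≫ ((P ⊗ Q) ◁ T₀) ≫ (ρ_ (P ⊗ Q)).hom) ∧
    IsSplitEpi
      (T.map (λ_ (P ⊗ Q)).inv ≫ rh (𝟙_ C) ≫ (T₀ ▷ (P ⊗ Q)) ≫
        (λ_ (P ⊗ Q)).hom) :=
  module_tensor_of_multiplierBimonad_general T Th₂ Tc₂ T₀ hThnat hTcnat hThcou hTccou hsplith Q qh
    qc hqhnat hqh hqc hqcompat₁ hqcompat₂ hqact hqe P ph pc hphnat hpcnat hph hpc hpcompat₁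
    hpcompat₂ hpact hpe rh hrh rc hrc
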